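/- With w, λ = λ(w), p = p(w), α = α(w) as above, we have α_k = λ_k - k + 1 for 1 ≤ k ≤ p, and in Frobenius notation: λ = (α_1 - 1, …, α_p - 1 | α_1, …, α_p) and the partition (λ_1+1, …, λ_p+1, λ_{p+2}, …, λ_n) equals (α_1, …, α_p | α_1 - 1, …, α_p - 1). -/

import Mathlib

open Finset

def Wcond (n : ℕ) (w : Equiv.Perm (Fin (2*n))) : Prop :=
  ∀ i : Fin (2*n), ((w i : ℕ) + 1) + ((w i.rev : ℕ) + 1) = 2*n + 1

def Wpar (n : ℕ) (w : Equiv.Perm (Fin (2*n))) : Prop :=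
  Even ((Finset.univ.filter (fun i : Fin (2*n) => (i : ℕ) < n ∧ n ≤ (w i : ℕ))).card)

noncomputable def jjf (n : ℕ) (w : Equiv.Perm (Fin (2*n))) (k : ℕ) : ℕ :=
  ((((Finset.univ.filter (fun i : Fin (2*n) => (i : ℕ) < n)).image w).sort (· ≤ ·)).map
    (fun x => (x : ℕ) + 1)).getD (k-1) 0

noncomputable def lamf (n : ℕ) (w : Equiv.Perm (Fin (2*n))) (k : ℕ) : ℤ :=
  if jjf n w (n+1-k) ≤ n then (jjf n w (n+1-k) : ℤ) - ((n+1-k : ℕ) : ℤ)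
  else (jjf n w (n+1-k) : ℤ) - ((n+1-k : ℕ) : ℤ) - 1

noncomputable def pval (n : ℕ) (w : Equiv.Perm (Fin (2*n))) : ℕ :=
  ((Finset.Icc 1 n).filter (fun k => n+2 ≤ jjf n w k)).card

noncomputable def lamconj (n : ℕ) (w : Equiv.Perm (Fin (2*n))) (k : ℕ) : ℤ :=
  (((Finset.Icc 1 n).filter (fun i => (k:ℤ) ≤ lamf n w i)).card : ℤ)

noncomputable def alphaf (n : ℕ) (w : Equiv.Perm (Fin (2*n))) (k : ℕ) : ℤ :=
  (jjf n w (n+1-k) : ℤ) - ((n : ℤ) + 1)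

noncomputable def muf (n : ℕ) (w : Equiv.Perm (Fin (2*n))) (k : ℕ) : ℤ :=
  if k ≤ pval n w then lamf n w k + 1 else if k + 1 ≤ n then lamf n w (k+1) else 0

noncomputable def muconj (n : ℕ) (w : Equiv.Perm (Fin (2*n))) (k : ℕ) : ℤ :=
  (((Finset.Icc 1 n).filter (fun i => (k:ℤ) ≤ muf n w i)).card : ℤ)

/-!
Write `J = {j_1 < ⋯ < j_n}` for the set `{w(1), …, w(n)}` and `N(c)` (`numGE`) for the number
of `j_m ≥ c`, so that `p = N(n+2)` and `j_{n+1-k} ≥ c ↔ N(c) ≥ k`. The condition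
`w(i) + w(2n+1-i) = 2n+1` says that `J` contains exactly one of `m` and `2n+1-m` for every `m`,
whence the reflection identity `N(c) + #{j ∈ J | j ≤ 2n+1-c} = 2n+1-c`. At `c = 2n+1-j_m` it reads
`N(2n+1-j_m) = j_m - m`, so both `λ_i` (when `j_{n+1-i} ≤ n`) and `α_k + k` are values of `N`.
The threshold property then gives `λ_i ≥ k ↔ i ≤ α_k + k` for `k ≤ p`, i.e. `λ'_k = α_k + k`,
and the same for `μ` after the shift of the rows below `p`.
-/

namespace Finset

theorem strictMonoOn_sort_getD_pred (s : Finset ℕ) :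
    StrictMonoOn (fun k => s.sort.getD (k - 1) 0) (Set.Icc 1 #s) := by
  intro a ⟨ha₁, ha₂⟩ b ⟨hb₁, hb₂⟩ hab
  have hlen : s.sort.length = #s := length_sort _
  simp only [List.getD_eq_getElem _ _ (show a - 1 < s.sort.length by omega),
    List.getD_eq_getElem _ _ (show b - 1 < s.sort.length by omega)]
  exact (sortedLT_sort s).strictMono_get
    (show (⟨a - 1, by omega⟩ : Fin _) < ⟨b - 1, by omega⟩ from Fin.mk_lt_mk.2 (by omega))

theorem image_sort_getD_pred (s : Finset ℕ) :
    (Icc 1 #s).image (fun k => s.sort.getD (k - 1) 0) = s := by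
  have hlen : s.sort.length = #s := length_sort _
  ext t
  simp only [mem_image, mem_Icc]
  constructor
  · rintro ⟨k, hk, rfl⟩
    rw [List.getD_eq_getElem _ _ (by omega), ← mem_sort (· ≤ ·)]
    exact List.getElem_mem _
  · intro ht
    obtain ⟨i, hi, rfl⟩ := List.getElem_of_mem ((mem_sort (· ≤ ·)).2 ht)
    exact ⟨i + 1, by omega, by rw [Nat.add_sub_cancel, List.getD_eq_getElem _ _ hi]⟩

end Finset

namespace StrictMonoOn

variable {e : ℕ → ℕ} {n : ℕ}

theorem le_apply_rev_iff_le_card (he : StrictMonoOn e (Set.Icc 1 n)) {k c : ℕ} (hk₁ : 1 ≤ k)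
    (hkn : k ≤ n) : c ≤ e (n + 1 - k) ↔ k ≤ #{m ∈ Icc 1 n | c ≤ e m} := by
  constructor
  · intro hc
    calc k = #(Icc (n + 1 - k) n) := by rw [Nat.card_Icc]; omega
      _ ≤ _ := card_le_card fun m hm => by
        simp only [mem_Icc, mem_filter] at hm ⊢
        exact ⟨by omega, hc.trans <| (he.le_iff_le ⟨by omega, by omega⟩ ⟨by omega, hm.2⟩).2 hm.1⟩
  · intro hk
    by_contra! hc
    have hsub : {m ∈ Icc 1 n | c ≤ e m} ⊆ Icc (n + 2 - k) n := fun m hm => by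
      simp only [mem_Icc, mem_filter] at hm ⊢
      refine ⟨?_, hm.1.2⟩
      by_contra! hm'
      have := (he.le_iff_le ⟨hm.1.1, hm.1.2⟩ ⟨by omega, by omega⟩).2 (show m ≤ n + 1 - k by omega)
      omega
    have := card_le_card hsub
    simp only [Nat.card_Icc] at this
    omega

theorem card_filter_apply_lt (he : StrictMonoOn e (Set.Icc 1 n)) {m : ℕ} (hm : m ∈ Icc 1 n) :
    #{m' ∈ Icc 1 n | e m + 1 ≤ e m'} = n - m := by
  rw [mem_Icc] at hm
  have : {m' ∈ Icc 1 n | e m + 1 ≤ e m'} = Icc (m + 1) n := by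
    ext m'
    simp only [mem_filter, mem_Icc, Nat.add_one_le_iff]
    constructor
    · rintro ⟨hm', h⟩
      exact ⟨Nat.add_one_le_iff.2 ((he.lt_iff_lt ⟨hm.1, hm.2⟩ ⟨hm'.1, hm'.2⟩).1 h), hm'.2⟩
    · rintro ⟨h, hm'⟩
      exact ⟨⟨by omega, hm'⟩, he ⟨hm.1, hm.2⟩ ⟨by omega, hm'⟩ (by omega)⟩
  rw [this, Nat.card_Icc]
  omega

theorem card_filter_image (he : StrictMonoOn e (Set.Icc 1 n)) (p : ℕ → Prop) [DecidablePred p] :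
    #{t ∈ (Icc 1 n).image e | p t} = #{m ∈ Icc 1 n | p (e m)} := by
  rw [filter_image, card_image_of_injOn]
  exact he.injOn.mono fun m hm => by simp only [coe_filter, mem_Icc] at hm; exact hm.1

end StrictMonoOn

/-- `t ↦ 2N+1-t` maps `{t ∈ s | t ≤ d}` onto the complement of `s` in `[c, 2N]`. -/
theorem card_filter_ge_add_card_filter_le_of_symm {s : Finset ℕ} {N : ℕ}
    (hs : s ⊆ Icc 1 (2 * N)) (hsymm : ∀ m ∈ Icc 1 (2 * N), m ∈ s ↔ 2 * N + 1 - m ∉ s) {c d : ℕ}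
    (hc : 1 ≤ c) (hcd : c + d = 2 * N + 1) :
    #{t ∈ s | c ≤ t} + #{t ∈ s | t ≤ d} = d := by
  have hlow : #{t ∈ s | t ≤ d} = #{t ∈ Icc c (2 * N) | t ∉ s} := by
    refine card_nbij' (fun t => 2 * N + 1 - t) (fun t => 2 * N + 1 - t) ?_ ?_ ?_ ?_
    · intro t ht
      simp only [coe_filter, Set.mem_ofPred_eq, mem_Icc] at ht ⊢
      have := mem_Icc.1 (hs ht.1)
      refine ⟨by omega, fun h => (hsymm _ (mem_Icc.2 (by omega))).1 h ?_⟩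
      rw [show 2 * N + 1 - (2 * N + 1 - t) = t by omega]
      exact ht.1
    · intro t ht
      simp only [coe_filter, Set.mem_ofPred_eq, mem_Icc] at ht ⊢
      exact ⟨by_contra fun h => ht.2 ((hsymm t (mem_Icc.2 (by omega))).2 h), by omega⟩
    · intro t ht
      simp only [coe_filter, Set.mem_ofPred_eq] at ht
      have := mem_Icc.1 (hs ht.1)
      dsimp only
      omega
    · intro t ht
      simp only [coe_filter, Set.mem_ofPred_eq, mem_Icc] at ht
      dsimp only
      omega
  have hhigh : #{t ∈ s | c ≤ t} = #{t ∈ Icc c (2 * N) | t ∈ s} := by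
    congr 1
    ext t
    have := fun h : t ∈ s => mem_Icc.1 (hs h)
    simp only [mem_filter, mem_Icc]
    constructor
    · rintro ⟨ht, hct⟩; exact ⟨⟨hct, (this ht).2⟩, ht⟩
    · rintro ⟨⟨hct, -⟩, ht⟩; exact ⟨ht, hct⟩
  rw [hlow, hhigh, card_filter_add_card_filter_not, Nat.card_Icc]
  omega

theorem card_filter_Icc_cast_le_eq {n : ℕ} {r : ℤ} (h₀ : 0 ≤ r) (hr : r ≤ n) :
    (#{i ∈ Icc 1 n | ((i : ℕ) : ℤ) ≤ r} : ℤ) = r := by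
  lift r to ℕ using h₀
  have : {i ∈ Icc 1 n | ((i : ℕ) : ℤ) ≤ r} = Icc 1 r := by
    ext i
    simp only [mem_filter, mem_Icc, Nat.cast_le]
    omega
  rw [this, Nat.card_Icc, Nat.add_sub_cancel]

def Jset (n : ℕ) (w : Equiv.Perm (Fin (2*n))) : Finset ℕ :=
  ((univ.filter fun i : Fin (2*n) => (i : ℕ) < n).image w).image fun x : Fin (2*n) => (x : ℕ) + 1

noncomputable def numGE (n : ℕ) (w : Equiv.Perm (Fin (2*n))) (c : ℕ) : ℕ :=
  #{m ∈ Icc 1 n | c ≤ jjf n w m}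

section Enumeration

variable {n : ℕ} {w : Equiv.Perm (Fin (2*n))}

theorem jjf_eq_sort_getD (k : ℕ) : jjf n w k = (Jset n w).sort.getD (k - 1) 0 := by
  let f : Fin (2*n) ↪ ℕ := ⟨fun x => (x : ℕ) + 1, fun a b h => Fin.ext (by simpa using h)⟩
  have hsort := map_sort f ((univ.filter fun i : Fin (2*n) => (i : ℕ) < n).image w) (· ≤ ·) (· ≤ ·)
    fun a _ b _ => by change a ≤ b ↔ (a : ℕ) + 1 ≤ (b : ℕ) + 1; omega
  rw [map_eq_image] at hsort
  simp only [jjf, Jset, List.map_eq_map, bind_pure_comp, List.map_map]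
  exact congrArg (List.getD · (k - 1) 0) hsort

theorem card_Jset : #(Jset n w) = n := by
  rw [Jset, card_image_of_injective _ (fun a b h => Fin.ext (by simpa using h)),
    card_image_of_injective _ w.injective, Fin.card_filter_val_lt]
  omega

theorem Jset_subset : Jset n w ⊆ Icc 1 (2 * n) := by
  intro t ht
  simp only [Jset, mem_image] at ht
  obtain ⟨x, -, rfl⟩ := ht
  simp only [mem_Icc]
  omega

theorem val_add_one_mem_Jset_iff {x : Fin (2*n)} : (x : ℕ) + 1 ∈ Jset n w ↔ (w.symm x : ℕ) < n := by
  simp only [Jset, mem_image, mem_filter, mem_univ, true_and, Nat.add_right_cancel_iff,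
    Fin.val_inj, exists_exists_and_eq_and]
  exact ⟨fun ⟨i, hi, h⟩ => by rwa [← h, Equiv.symm_apply_apply],
    fun h => ⟨_, h, w.apply_symm_apply x⟩⟩

theorem jjf_strictMonoOn : StrictMonoOn (jjf n w) (Set.Icc 1 n) := by
  have h := (Jset n w).strictMonoOn_sort_getD_pred
  rw [card_Jset] at h
  simpa only [← jjf_eq_sort_getD] using h

theorem image_jjf_Icc : (Icc 1 n).image (jjf n w) = Jset n w := by
  have h := (Jset n w).image_sort_getD_pred
  rw [card_Jset] at h
  simpa only [← jjf_eq_sort_getD] using h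

theorem jjf_mem_Icc {m : ℕ} (hm : m ∈ Icc 1 n) : jjf n w m ∈ Icc 1 (2 * n) :=
  Jset_subset (image_jjf_Icc ▸ mem_image_of_mem _ hm)

theorem le_jjf_rev_iff {k c : ℕ} (hk₁ : 1 ≤ k) (hkn : k ≤ n) :
    c ≤ jjf n w (n + 1 - k) ↔ k ≤ numGE n w c :=
  jjf_strictMonoOn.le_apply_rev_iff_le_card hk₁ hkn

theorem numGE_le (c : ℕ) : numGE n w c ≤ n :=
  (card_filter_le _ _).trans (by simp)

theorem numGE_antitone : Antitone (numGE n w) :=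
  fun _ _ hcc' => card_le_card (monotone_filter_right _ fun _ _ h => hcc'.trans h)

theorem numGE_jjf_add_one {m : ℕ} (hm : m ∈ Icc 1 n) : numGE n w (jjf n w m + 1) = n - m :=
  jjf_strictMonoOn.card_filter_apply_lt hm

theorem pval_eq_numGE : pval n w = numGE n w (n + 2) := rfl

theorem pval_le : pval n w ≤ n :=
  numGE_le _

theorem le_jjf_of_le_pval {k : ℕ} (hk : 1 ≤ k) (hkp : k ≤ pval n w) :
    n + 2 ≤ jjf n w (n + 1 - k) :=
  (le_jjf_rev_iff hk (hkp.trans pval_le)).2 hkp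

theorem lamf_eq_alphaf_add {k : ℕ} (hk : 1 ≤ k) (hkp : k ≤ pval n w) :
    lamf n w k = alphaf n w k + k - 1 := by
  have := le_jjf_of_le_pval hk hkp
  have := hkp.trans pval_le
  rw [lamf, if_neg (by omega), alphaf]
  omega

end Enumeration

section Reflection

variable {n : ℕ} {w : Equiv.Perm (Fin (2*n))} (hw : Wcond n w)
include hw

theorem Wcond.apply_rev (i : Fin (2*n)) : w i.rev = (w i).rev :=
  Fin.ext (by have := hw i; simp only [Fin.val_rev]; omega)

theorem Wcond.mem_Jset_iff_notMem {m : ℕ} (hm : m ∈ Icc 1 (2 * n)) :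
    m ∈ Jset n w ↔ 2 * n + 1 - m ∉ Jset n w := by
  rw [mem_Icc] at hm
  let x : Fin (2*n) := ⟨m - 1, by omega⟩
  have hsymm : w.symm x.rev = (w.symm x).rev := by
    rw [Equiv.symm_apply_eq, hw.apply_rev, Equiv.apply_symm_apply]
  have h₁ := val_add_one_mem_Jset_iff (w := w) (x := x)
  have h₂ := val_add_one_mem_Jset_iff (w := w) (x := x.rev)
  simp only [hsymm, Fin.val_rev, x] at h₁ h₂
  rw [show m - 1 + 1 = m by omega] at h₁
  rw [show 2 * n - (m - 1 + 1) + 1 = 2 * n + 1 - m by omega] at h₂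
  rw [h₁, h₂]
  omega

theorem Wcond.numGE_add {c d : ℕ} (hc : 1 ≤ c) (hcd : c + d = 2 * n + 1) :
    numGE n w c + n = numGE n w (d + 1) + d := by
  have hrefl := card_filter_ge_add_card_filter_le_of_symm Jset_subset
    (fun m hm => hw.mem_Jset_iff_notMem hm) hc hcd
  have hsplit := card_filter_add_card_filter_not (s := Jset n w) (fun t => d + 1 ≤ t)
  simp only [not_le, Nat.lt_add_one_iff, card_Jset] at hsplit
  rw [← image_jjf_Icc] at hrefl hsplit
  simp only [jjf_strictMonoOn.card_filter_image] at hrefl hsplit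
  rw [numGE, numGE]
  omega

theorem Wcond.numGE_reflect_jjf_add {m : ℕ} (hm : m ∈ Icc 1 n) :
    numGE n w (2 * n + 1 - jjf n w m) + m = jjf n w m := by
  have hj := mem_Icc.1 (jjf_mem_Icc (w := w) hm)
  have := hw.numGE_add (c := 2 * n + 1 - jjf n w m) (d := jjf n w m) (by omega) (by omega)
  rw [numGE_jjf_add_one hm] at this
  have := (mem_Icc.1 hm).2
  omega

theorem Wcond.pval_lt_numGE {c : ℕ} (hn : 1 ≤ n) (hc : c ≤ n) : pval n w < numGE n w c := by
  have : numGE n w n + n = numGE n w (n + 2) + (n + 1) := hw.numGE_add hn (by omega)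
  have := numGE_antitone (w := w) hc
  rw [pval_eq_numGE]
  omega

theorem Wcond.alphaf_add_eq_numGE {k : ℕ} (hk : 1 ≤ k) (hkn : k ≤ n) :
    alphaf n w k + k = numGE n w (2 * n + 1 - jjf n w (n + 1 - k)) := by
  have := hw.numGE_reflect_jjf_add (m := n + 1 - k) (mem_Icc.2 ⟨by omega, by omega⟩)
  rw [alphaf]
  omega

theorem Wcond.alphaf_add_le {k : ℕ} (hk : 1 ≤ k) (hkn : k ≤ n) : alphaf n w k + k ≤ n := by
  rw [hw.alphaf_add_eq_numGE hk hkn, Nat.cast_le]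
  exact numGE_le _

theorem Wcond.pval_lt_alphaf_add {k : ℕ} (hk : 1 ≤ k) (hkp : k ≤ pval n w) :
    (pval n w : ℤ) < alphaf n w k + k := by
  have := le_jjf_of_le_pval hk hkp
  have := hkp.trans pval_le
  rw [hw.alphaf_add_eq_numGE hk (by omega), Nat.cast_lt]
  exact hw.pval_lt_numGE (by omega) (by omega)

theorem Wcond.le_lamf_iff {k i : ℕ} (hk : 1 ≤ k) (hkp : k ≤ pval n w) (hi : i ∈ Icc 1 n) :
    (k : ℤ) ≤ lamf n w i ↔ (i : ℤ) ≤ alphaf n w k + k := by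
  have hpn := pval_le (w := w)
  rw [mem_Icc] at hi
  have ha := le_jjf_of_le_pval hk hkp
  have ha' := mem_Icc.1 (jjf_mem_Icc (w := w) (m := n + 1 - k) (mem_Icc.2 ⟨by omega, by omega⟩))
  have hb := mem_Icc.1 (jjf_mem_Icc (w := w) (m := n + 1 - i) (mem_Icc.2 ⟨by omega, by omega⟩))
  have hlam := hw.numGE_reflect_jjf_add (m := n + 1 - i) (mem_Icc.2 ⟨by omega, by omega⟩)
  rw [hw.alphaf_add_eq_numGE hk (by omega), Nat.cast_le, ← le_jjf_rev_iff hi.1 hi.2, lamf]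
  split_ifs with hbn
  · have := le_jjf_rev_iff (w := w) (c := 2 * n + 1 - jjf n w (n + 1 - i)) hk (by omega)
    omega
  -- Both sides hold: `λ_i + 1 = N(2n+1-j_{n+1-i}) ≥ N(n) > p`.
  · have := hw.pval_lt_numGE (c := 2 * n + 1 - jjf n w (n + 1 - i)) (by omega) (by omega)
    omega

theorem Wcond.le_muf_iff {k i : ℕ} (hk : 1 ≤ k) (hkp : k ≤ pval n w) (hi : i ∈ Icc 1 n) :
    (k : ℤ) ≤ muf n w i ↔ (i : ℤ) + 1 ≤ alphaf n w k + k := by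
  have hp := hw.pval_lt_alphaf_add hk hkp
  have hn := hw.alphaf_add_le hk (hkp.trans pval_le)
  rw [mem_Icc] at hi
  rw [muf]
  split_ifs with hip hin
  · have := (hw.le_lamf_iff hk hkp (mem_Icc.2 hi)).2 (by omega)
    omega
  · rw [hw.le_lamf_iff hk hkp (mem_Icc.2 ⟨by omega, hin⟩)]
    push_cast
    rfl
  · omega

theorem Wcond.lamconj_eq {k : ℕ} (hk : 1 ≤ k) (hkp : k ≤ pval n w) :
    lamconj n w k = alphaf n w k + k := by
  have := hw.pval_lt_alphaf_add hk hkp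
  rw [lamconj, filter_congr fun i hi => hw.le_lamf_iff hk hkp hi]
  exact card_filter_Icc_cast_le_eq (by omega) (hw.alphaf_add_le hk (hkp.trans pval_le))

theorem Wcond.muconj_eq {k : ℕ} (hk : 1 ≤ k) (hkp : k ≤ pval n w) :
    muconj n w k = alphaf n w k + k - 1 := by
  have := hw.pval_lt_alphaf_add hk hkp
  have := hw.alphaf_add_le hk (hkp.trans pval_le)
  rw [muconj, filter_congr fun i hi => (hw.le_muf_iff hk hkp hi).trans le_sub_iff_add_le.symm]
  exact card_filter_Icc_cast_le_eq (n := n) (r := alphaf n w k + k - 1) (by omega) (by omega)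

end Reflection

theorem stmt11_general (n : ℕ) (w : Equiv.Perm (Fin (2*n)))
    (hw : Wcond n w) :
    (∀ k, 1 ≤ k → k ≤ pval n w → alphaf n w k = lamf n w k - (k:ℤ) + 1) ∧
    (∀ k, 1 ≤ k → k ≤ pval n w →
      lamf n w k - (k:ℤ) = alphaf n w k - 1 ∧ lamconj n w k - (k:ℤ) = alphaf n w k) ∧
    (∀ k, 1 ≤ k → k ≤ pval n w →
      muf n w k - (k:ℤ) = alphaf n w k ∧ muconj n w k - (k:ℤ) = alphaf n w k - 1) := by
  refine ⟨fun k hk hkp => ?_, fun k hk hkp => ⟨?_, ?_⟩, fun k hk hkp => ⟨?_, ?_⟩⟩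
  · rw [lamf_eq_alphaf_add hk hkp]; ring
  · rw [lamf_eq_alphaf_add hk hkp]; ring
  · rw [hw.lamconj_eq hk hkp]; ring
  · rw [muf, if_pos hkp, lamf_eq_alphaf_add hk hkp]; ring
  · rw [hw.muconj_eq hk hkp]; ring

theorem stmt11 (n : ℕ) (hn : 1 ≤ n) (w : Equiv.Perm (Fin (2*n)))
    (hw : Wcond n w) (hpar : Wpar n w) :
    (∀ k, 1 ≤ k → k ≤ pval n w → alphaf n w k = lamf n w k - (k:ℤ) + 1) ∧
    (∀ k, 1 ≤ k → k ≤ pval n w →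
      lamf n w k - (k:ℤ) = alphaf n w k - 1 ∧ lamconj n w k - (k:ℤ) = alphaf n w k) ∧
    (∀ k, 1 ≤ k → k ≤ pval n w →
      muf n w k - (k:ℤ) = alphaf n w k ∧ muconj n w k - (k:ℤ) = alphaf n w k - 1) :=
  stmt11_general n w hw
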